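/- For m = 1, the Davies–Mandouvalos recursion gives α_3 = f_1 = ρ/sinh(ρ), and log α_3 is convex in σ = cosh(ρ): (1/sinh ρ · d/dρ)² log(ρ/sinh ρ) ≥ 0 for all ρ > 0. -/

import Mathlib

/-- Derivative with respect to `σ = cosh ρ`. -/
noncomputable def sigmaDeriv (g : ℝ → ℝ) (ρ : ℝ) : ℝ := (1 / Real.sinh ρ) * deriv g ρ

/-!
With `s = sinh ρ`, `c = cosh ρ`, two σ-derivatives of `log (ρ / sinh ρ)` give
`(2ρ² + ρ²s² - ρsc - s²) / (ρ² s⁴)`. Using `c² = 1 + s²`, the numerator equals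
`ρc (ρc + 2ρ - 3s) + (s - ρ)(2ρc - s - ρ)`, and every factor is nonnegative by
the elementary inequalities `ρ ≤ s ≤ ρc` and the hyperbolic Cusa–Huygens inequality
`3 sinh ρ ≤ ρ (cosh ρ + 2)`, each proved by differentiating.
-/

open Real Set

lemma monotoneOn_Ici_of_hasDerivAt_nonneg {f f' : ℝ → ℝ} {a : ℝ}
    (hf : ∀ x, a ≤ x → HasDerivAt f (f' x) x) (hf' : ∀ x, a ≤ x → 0 ≤ f' x) :
    MonotoneOn f (Ici a) := by
  refine monotoneOn_of_hasDerivWithinAt_nonneg (f' := f') (convex_Ici a)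
    (fun x hx => (hf x hx).continuousAt.continuousWithinAt) (fun x hx => ?_) (fun x hx => ?_)
  all_goals rw [interior_Ici] at hx
  · exact (hf x (le_of_lt hx)).hasDerivWithinAt
  · exact hf' x (le_of_lt hx)

namespace Real

lemma sinh_le_mul_cosh {x : ℝ} (hx : 0 ≤ x) : sinh x ≤ x * cosh x := by
  have hmono : MonotoneOn (fun x => x * cosh x - sinh x) (Ici 0) :=
    monotoneOn_Ici_of_hasDerivAt_nonneg (f' := fun x => x * sinh x)
      (fun y _ => (((hasDerivAt_id y).mul (hasDerivAt_cosh y)).sub (hasDerivAt_sinh y)).congr_deriv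
        (by simp only [id_eq]; ring))
      (fun y hy => mul_nonneg hy (sinh_nonneg_iff.2 hy))
  simpa using hmono self_mem_Ici hx hx

lemma three_mul_sinh_le {x : ℝ} (hx : 0 ≤ x) : 3 * sinh x ≤ x * (cosh x + 2) := by
  have hderiv_mono : MonotoneOn (fun x => x * sinh x + 2 - 2 * cosh x) (Ici 0) :=
    monotoneOn_Ici_of_hasDerivAt_nonneg (f' := fun x => x * cosh x - sinh x)
      (fun y _ => ((((hasDerivAt_id y).mul (hasDerivAt_sinh y)).add_const 2).sub
        ((hasDerivAt_cosh y).const_mul 2)).congr_deriv (by simp only [id_eq]; ring))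
      (fun y hy => sub_nonneg.2 (sinh_le_mul_cosh hy))
  have hmono : MonotoneOn (fun x => x * (cosh x + 2) - 3 * sinh x) (Ici 0) :=
    monotoneOn_Ici_of_hasDerivAt_nonneg (f' := fun x => x * sinh x + 2 - 2 * cosh x)
      (fun y _ => (((hasDerivAt_id y).mul ((hasDerivAt_cosh y).add_const 2)).sub
        ((hasDerivAt_sinh y).const_mul 3)).congr_deriv (by simp only [id_eq]; ring))
      (fun y hy => by simpa using hderiv_mono self_mem_Ici hy hy)
  simpa using hmono self_mem_Ici hx hx

end Real

lemma sigmaDeriv_eq_of_hasDerivAt {g : ℝ → ℝ} {g' ρ : ℝ} (hg : HasDerivAt g g' ρ) :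
    sigmaDeriv g ρ = g' / sinh ρ := by
  rw [sigmaDeriv, hg.deriv, one_div_mul_eq_div]

lemma hasDerivAt_log_div_sinh {x : ℝ} (hx : 0 < x) :
    HasDerivAt (fun x => log (x / sinh x)) (1 / x - cosh x / sinh x) x := by
  have hs : 0 < sinh x := sinh_pos_iff.2 hx
  have hquot : HasDerivAt (fun x => x / sinh x) ((1 * sinh x - x * cosh x) / sinh x ^ 2) x :=
    (hasDerivAt_id x).div (hasDerivAt_sinh x) hs.ne'
  convert hquot.log (div_pos hx hs).ne' using 1
  field_simp

lemma sigmaDeriv_log_div_sinh {x : ℝ} (hx : 0 < x) :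
    sigmaDeriv (fun x => log (x / sinh x)) x = (sinh x - x * cosh x) / (x * sinh x ^ 2) := by
  have hs : 0 < sinh x := sinh_pos_iff.2 hx
  rw [sigmaDeriv_eq_of_hasDerivAt (hasDerivAt_log_div_sinh hx)]
  field_simp

lemma hasDerivAt_sigmaDeriv_log_div_sinh {x : ℝ} (hx : 0 < x) :
    HasDerivAt (sigmaDeriv fun x => log (x / sinh x))
      ((x ^ 2 * (2 + sinh x ^ 2) - x * sinh x * cosh x - sinh x ^ 2) / (x ^ 2 * sinh x ^ 3)) x := by
  have hs : 0 < sinh x := sinh_pos_iff.2 hx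
  have hclosed : (fun y => (sinh y - y * cosh y) / (y * sinh y ^ 2))
      =ᶠ[nhds x] sigmaDeriv fun x => log (x / sinh x) := by
    filter_upwards [Ioi_mem_nhds hx] with y hy
    exact (sigmaDeriv_log_div_sinh hy).symm
  refine HasDerivAt.congr_of_eventuallyEq ?_ hclosed.symm
  have hnum : HasDerivAt (fun y => sinh y - y * cosh y) (cosh x - (1 * cosh x + x * sinh x)) x :=
    (hasDerivAt_sinh x).sub ((hasDerivAt_id x).mul (hasDerivAt_cosh x))
  have hden : HasDerivAt (fun y => y * sinh y ^ 2)
      (1 * sinh x ^ 2 + x * (2 * sinh x ^ 1 * cosh x)) x :=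
    (hasDerivAt_id x).mul ((hasDerivAt_sinh x).pow 2)
  refine (hnum.div hden (by positivity)).congr_deriv ?_
  rw [div_eq_div_iff (by positivity) (by positivity)]
  linear_combination (2 * x ^ 4 * sinh x ^ 4) * cosh_sq x

lemma sigmaDeriv_numerator_nonneg {x : ℝ} (hx : 0 ≤ x) :
    0 ≤ x ^ 2 * (2 + sinh x ^ 2) - x * sinh x * cosh x - sinh x ^ 2 := by
  have hcusa : 0 ≤ x * (cosh x + 2) - 3 * sinh x := sub_nonneg.2 (three_mul_sinh_le hx)
  have hself_le_sinh : 0 ≤ sinh x - x := sub_nonneg.2 (self_le_sinh_iff.2 hx)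
  have hsum_le : 0 ≤ 2 * (x * cosh x) - sinh x - x := by
    nlinarith [sinh_le_mul_cosh hx, one_le_cosh x]
  have hxc : 0 ≤ x * cosh x := mul_nonneg hx (cosh_pos x).le
  calc (0 : ℝ) ≤ x * cosh x * (x * (cosh x + 2) - 3 * sinh x)
        + (sinh x - x) * (2 * (x * cosh x) - sinh x - x) := by positivity
    _ = x ^ 2 * (2 + sinh x ^ 2) - x * sinh x * cosh x - sinh x ^ 2 := by
        linear_combination x ^ 2 * cosh_sq x

/-- `α_3 = f_1 = ρ/sinh ρ`, and `log α_3` is convex in `σ = cosh ρ`. -/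
theorem log_alpha3_convex (ρ : ℝ) (hρ : 0 < ρ) :
    0 ≤ sigmaDeriv (sigmaDeriv (fun x => Real.log (x / Real.sinh x))) ρ := by
  rw [sigmaDeriv_eq_of_hasDerivAt (hasDerivAt_sigmaDeriv_log_div_sinh hρ)]
  have hnum := sigmaDeriv_numerator_nonneg hρ.le
  have hsinh := sinh_pos_iff.2 hρ
  positivity
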